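/- For every positive integer t there exists an integer N(t) such that every irreducible bipartite graph that contains no induced P_t, no induced K_{t-1,t}, and no induced T_t has at most N(t) vertices. Equivalently, for all positive integers i, j, k, there are (up to isomorphism) only finitely many irreducible graphs that are simultaneously P_i-free, K_{j,j}-free and T_k-free. -/

import Mathlib

open SimpleGraph

/-- `S` is an independent set in `G`: pairwise non-adjacent vertices. -/
def IndepOn {V : Type*} (G : SimpleGraph V) (S : Set V) : Prop :=
  S.Pairwise fun u v => ¬ G.Adj u v

/-- `NSet G U` is the set of vertices adjacent to at least one vertex of `U`. -/
def NSet {V : Type*} (G : SimpleGraph V) (U : Set V) : Set V :=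
  {v | ∃ u ∈ U, G.Adj u v}

/-- `(W, B)` is a bipartition of `G` into two independent parts covering all vertices. -/
def IsBipartition {V : Type*} (G : SimpleGraph V) (W B : Set V) : Prop :=
  W ∪ B = Set.univ ∧ Disjoint W B ∧ IndepOn G W ∧ IndepOn G B

/-- A bipartite graph `G` with parts `W` and `B` is irreducible if
(a) `|W| = |B| - 1`, (b) every nonempty `A ⊆ W` satisfies `|A| < |N(A) ∩ B|`,
and (c) `G` is connected. -/
def IrreducibleBip {V : Type*} (G : SimpleGraph V) (W B : Set V) : Prop :=
  IsBipartition G W B ∧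
  W.ncard + 1 = B.ncard ∧
  (∀ A ⊆ W, A.Nonempty → A.ncard < (NSet G A ∩ B).ncard) ∧
  G.Connected

/-- The simple tree `T_k`: the star `K_{1,k}` with each edge subdivided once.
Vertex `0` is the centre, vertices `1,…,k` are the subdivision vertices `a_i`,
and vertices `k+1,…,2k` are the leaves `b_i = i + k`. -/
def simpleTree (k : ℕ) : SimpleGraph (Fin (2 * k + 1)) :=
  SimpleGraph.fromRel fun i j =>
    (i.val = 0 ∧ 1 ≤ j.val ∧ j.val ≤ k) ∨ (1 ≤ i.val ∧ i.val ≤ k ∧ j.val = i.val + k)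

/-- The tree `S_{1,1,3}`: three leaves at distances 1, 1, 3 from the unique degree-3
vertex `0`. Edges: 0-1, 0-2, 0-3, 3-4, 4-5. -/
def S113 : SimpleGraph (Fin 6) :=
  SimpleGraph.fromRel fun i j =>
    (i = 0 ∧ j = 1) ∨ (i = 0 ∧ j = 2) ∨ (i = 0 ∧ j = 3) ∨ (i = 3 ∧ j = 4) ∨ (i = 4 ∧ j = 5)

/-- The claw `K_{1,3}`-freeness. -/
def ClawFree {V : Type*} (G : SimpleGraph V) : Prop :=
  IsEmpty (completeBipartiteGraph (Fin 1) (Fin 3) ↪g G)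

/-!
An irreducible graph is connected, and a shortest path is induced, so a `P_a`-free one has
diameter at most `a - 2`; hence it suffices to bound the maximum degree.

For the degree, grow a set `X` on one side together with its common neighbourhood `Y`, starting
from a single vertex and its neighbourhood. A vertex outside `X` with many neighbours in `Y` is
added to `X`; once `|X| = b` a large `Y` would give an induced `K_{b,b}`. If no such vertex exists,
the surplus condition shows that all but `|X| + 1` vertices of `Y` have a neighbour outside `X`,
each such neighbour sees few vertices of `Y`, and an independent set of the resulting sparse
relation yields an induced `T_k` centred at a vertex of `X`.
-/

open Finset

theorem Finset.exists_pairwise_not_rel_card_le {α : Type*} [DecidableEq α] (r : α → α → Prop)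
    [DecidableRel r] (m : ℕ) (P : Finset α) (hP : ∀ p ∈ P, #{q ∈ P | r p q} < m) :
    ∃ S ⊆ P, (S : Set α).Pairwise (fun x y => ¬ r x y) ∧ #P ≤ 2 * m * #S := by
  induction P using strongInduction with
  | _ P ih =>
  obtain rfl | hne := P.eq_empty_or_nonempty
  · exact ⟨∅, by simp⟩
  -- double counting: the in-degrees sum to the out-degrees, so some `q` has total degree `< 2m`
  have hsum : ∑ q ∈ P, (#{p ∈ P | r q p} + #{p ∈ P | r p q}) ≤ ∑ _q ∈ P, 2 * (m - 1) := by
    have hout : ∑ q ∈ P, #{p ∈ P | r q p} ≤ #P * (m - 1) := by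
      simpa using sum_le_sum fun q hq => Nat.le_sub_one_of_lt (hP q hq)
    have := sum_card_bipartiteAbove_eq_sum_card_bipartiteBelow (s := P) (t := P) (r := r)
    simp only [bipartiteAbove, bipartiteBelow] at this
    rw [sum_add_distrib, ← this, sum_const, smul_eq_mul]
    lia
  obtain ⟨q, hq, hdeg⟩ := exists_le_of_sum_le hne hsum
  set R := insert q ({p ∈ P | r q p} ∪ {p ∈ P | r p q})
  have hRP : R ⊆ P := insert_subset hq (union_subset (filter_subset _ _) (filter_subset _ _))
  have hR : #R ≤ 2 * m := calc
    #R ≤ #{p ∈ P | r q p} + #{p ∈ P | r p q} + 1 :=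
      (card_insert_le _ _).trans (by gcongr; exact card_union_le _ _)
    _ ≤ 2 * m := by have := hP q hq; omega
  obtain ⟨S, hSP, hS, hcard⟩ := ih (P \ R) (sdiff_ssubset hRP ⟨q, mem_insert_self _ _⟩)
    fun p hp => (card_le_card (filter_subset_filter _ sdiff_subset)).trans_lt
      (hP p (mem_sdiff.1 hp).1)
  have hqS : ∀ s ∈ S, s ≠ q ∧ ¬ r q s ∧ ¬ r s q := fun s hs => by
    have := mem_sdiff.1 (hSP hs)
    simp_all [R]
  refine ⟨insert q S, insert_subset hq (hSP.trans sdiff_subset), ?_, ?_⟩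
  · rw [coe_insert]
    exact hS.insert fun s hs _ => ⟨(hqS s hs).2.1, (hqS s hs).2.2⟩
  · rw [card_insert_of_notMem fun h => (hqS q h).1 rfl]
    have := card_sdiff_add_card_eq_card hRP
    nlinarith

namespace SimpleGraph

variable {V : Type*} {G : SimpleGraph V} {u v : V}

lemma Walk.dist_getVert_of_length_eq_dist (p : G.Walk u v) (hp : p.length = G.dist u v)
    {i : ℕ} (hi : i ≤ p.length) : G.dist u (p.getVert i) = i := by
  have hle : G.dist u (p.getVert i) ≤ i := by
    simpa [Walk.take_length, hi] using dist_le (p.take i)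
  have hdrop : G.dist (p.getVert i) v ≤ p.length - i := by
    simpa [Walk.drop_length] using dist_le (p.drop i)
  have := (p.take i).reachable.dist_triangle_left (w := v)
  omega

/-- Initial segments of a shortest walk are induced paths. -/
lemma Reachable.nonempty_pathGraph_embedding (h : G.Reachable u v) {n : ℕ}
    (hn : n ≤ G.dist u v + 1) : Nonempty (pathGraph n ↪g G) := by
  obtain ⟨p, hp⟩ := h.exists_walk_length_eq_dist
  have hdist (i : Fin n) : G.dist u (p.getVert i) = i :=
    p.dist_getVert_of_length_eq_dist hp (by omega)
  refine ⟨⟨⟨fun i => p.getVert i, fun i j hij => Fin.ext ?_⟩, ?_⟩⟩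
  · simpa [hdist] using congrArg (G.dist u) hij
  · intro i j
    change G.Adj (p.getVert i) (p.getVert j) ↔ _
    rw [pathGraph_adj]
    refine ⟨fun hadj => ?_, ?_⟩
    · have hne : (i : ℕ) ≠ j := fun h => G.ne_of_adj hadj (by rw [h])
      have := hadj.diff_dist_adj (u := u)
      rw [hdist, hdist] at this
      omega
    · rintro (h | h)
      · simpa [← h] using p.adj_getVert_succ (i := i) (by omega)
      · simpa [← h] using (p.adj_getVert_succ (i := j) (by omega)).symm

lemma Connected.card_le_pow_of_degree_lt [Fintype V] [DecidableRel G.Adj] (hG : G.Connected)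
    {D r : ℕ} (hD : ∀ v, G.degree v < D) (hr : ∀ u v, G.dist u v ≤ r) :
    Fintype.card V ≤ D ^ r := by
  classical
  obtain ⟨v₀⟩ := hG.nonempty
  have hball (n : ℕ) : #{x | G.dist v₀ x ≤ n} ≤ D ^ n := by
    induction n with
    | zero =>
      refine (card_le_one.2 fun x hx y hy => ?_).trans (by simp)
      simp only [mem_filter, mem_univ, true_and, Nat.le_zero, hG.dist_eq_zero_iff] at hx hy
      rw [← hx, ← hy]
    | succ n ih =>
      have hsub : ({x | G.dist v₀ x ≤ n + 1} : Finset V) ⊆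
          ({x | G.dist v₀ x ≤ n} : Finset V).biUnion fun y => insert y (G.neighborFinset y) := by
        intro x hx
        simp only [mem_filter, mem_univ, true_and] at hx
        obtain hxn | hxn := Nat.lt_or_eq_of_le hx
        · exact mem_biUnion.2 ⟨x, by simpa using Nat.lt_succ_iff.1 hxn, mem_insert_self _ _⟩
        obtain ⟨p, hp⟩ := hG.exists_walk_length_eq_dist v₀ x
        have hpn : ¬ p.Nil := by simp [← Walk.length_eq_zero_iff, hp, hxn]
        refine mem_biUnion.2 ⟨p.penultimate, ?_, mem_insert_of_mem ?_⟩
        · simpa [Walk.length_dropLast, hp, hxn] using dist_le p.dropLast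
        · exact (mem_neighborFinset _ _ _).2 (p.adj_penultimate hpn)
      calc #{x | G.dist v₀ x ≤ n + 1}
          ≤ ∑ y ∈ {x | G.dist v₀ x ≤ n}, #(insert y (G.neighborFinset y)) :=
            (card_le_card hsub).trans card_biUnion_le
        _ ≤ ∑ _y ∈ {x | G.dist v₀ x ≤ n}, D :=
            sum_le_sum fun y _ => (card_insert_le _ _).trans (hD y)
        _ ≤ D ^ (n + 1) := by rw [sum_const, smul_eq_mul, pow_succ]; gcongr
  calc Fintype.card V = #{x | G.dist v₀ x ≤ r} := by
        rw [filter_true_of_mem fun x _ => hr v₀ x, card_univ]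
    _ ≤ D ^ r := hball r

end SimpleGraph

namespace simpleTree

variable {k : ℕ}

def mid (i : Fin k) : Fin (2 * k + 1) := ⟨i + 1, by omega⟩

def leaf (i : Fin k) : Fin (2 * k + 1) := ⟨i + 1 + k, by omega⟩

lemma eq_zero_or_mid_or_leaf (u : Fin (2 * k + 1)) :
    u = 0 ∨ (∃ i, u = mid i) ∨ ∃ i, u = leaf i := by
  obtain ⟨u, hu⟩ := u
  rcases Nat.eq_zero_or_pos u with rfl | hu0
  · exact Or.inl rfl
  by_cases huk : u ≤ k
  · exact Or.inr (Or.inl ⟨⟨u - 1, by omega⟩, Fin.ext (by simp [mid]; omega)⟩)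
  · exact Or.inr (Or.inr ⟨⟨u - 1 - k, by omega⟩, Fin.ext (by simp [leaf]; omega)⟩)

@[simp] lemma mid_inj {i j : Fin k} : mid i = mid j ↔ i = j := by simp [mid, Fin.ext_iff]
@[simp] lemma leaf_inj {i j : Fin k} : leaf i = leaf j ↔ i = j := by simp [leaf, Fin.ext_iff]
@[simp] lemma mid_ne_zero (i : Fin k) : mid i ≠ 0 := by simp [mid, Fin.ext_iff]
@[simp] lemma leaf_ne_zero (i : Fin k) : leaf i ≠ 0 := by simp [leaf, Fin.ext_iff]
@[simp] lemma mid_ne_leaf (i j : Fin k) : mid i ≠ leaf j := by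
  simp [mid, leaf, Fin.ext_iff]; omega

lemma adj_iff {u v : Fin (2 * k + 1)} : (simpleTree k).Adj u v ↔ u ≠ v ∧
    ((u.val = 0 ∧ 1 ≤ v.val ∧ v.val ≤ k) ∨ (1 ≤ u.val ∧ u.val ≤ k ∧ v.val = u.val + k) ∨
     (v.val = 0 ∧ 1 ≤ u.val ∧ u.val ≤ k) ∨ (1 ≤ v.val ∧ v.val ≤ k ∧ u.val = v.val + k)) := by
  rw [simpleTree, SimpleGraph.fromRel_adj]
  tauto

@[simp] lemma adj_zero_mid (i : Fin k) : (simpleTree k).Adj 0 (mid i) := by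
  rw [adj_iff]; simp [mid, Fin.ext_iff]
@[simp] lemma not_adj_zero_leaf (i : Fin k) : ¬ (simpleTree k).Adj 0 (leaf i) := by
  rw [adj_iff]; simp [leaf]
@[simp] lemma adj_mid_leaf {i j : Fin k} : (simpleTree k).Adj (mid i) (leaf j) ↔ i = j := by
  rw [adj_iff]; simp [mid, leaf, Fin.ext_iff]; omega
@[simp] lemma not_adj_mid_mid (i j : Fin k) : ¬ (simpleTree k).Adj (mid i) (mid j) := by
  rw [adj_iff]; simp [mid]; omega
@[simp] lemma not_adj_leaf_leaf (i j : Fin k) : ¬ (simpleTree k).Adj (leaf i) (leaf j) := by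
  rw [adj_iff]; simp [leaf]

@[simp] lemma adj_mid_zero (i : Fin k) : (simpleTree k).Adj (mid i) 0 := (adj_zero_mid i).symm
@[simp] lemma not_adj_leaf_zero (i : Fin k) : ¬ (simpleTree k).Adj (leaf i) 0 :=
  fun h => not_adj_zero_leaf i h.symm
@[simp] lemma adj_leaf_mid {i j : Fin k} : (simpleTree k).Adj (leaf i) (mid j) ↔ j = i := by
  rw [SimpleGraph.adj_comm, adj_mid_leaf]

variable {V : Type*} {G : SimpleGraph V}

lemma nonempty_embedding_of (c : V) (a b : Fin k → V) (hca : ∀ i, G.Adj c (a i))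
    (hab : ∀ i j, G.Adj (a i) (b j) ↔ i = j) (hcb : ∀ i, ¬ G.Adj c (b i))
    (haa : ∀ i j, ¬ G.Adj (a i) (a j)) (hbb : ∀ i j, ¬ G.Adj (b i) (b j))
    (hcb_ne : ∀ i, c ≠ b i) :
    Nonempty (simpleTree k ↪g G) := by
  let f (u : Fin (2 * k + 1)) : V :=
    if h0 : (u : ℕ) = 0 then c
    else if h : (u : ℕ) ≤ k then a ⟨u - 1, by omega⟩ else b ⟨u - 1 - k, by omega⟩
  have f_zero : f 0 = c := rfl
  have f_mid (i : Fin k) : f (mid i) = a i := by simp [f, mid]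
  have f_leaf (i : Fin k) : f (leaf i) = b i := by simp [f, leaf]
  have hac (i : Fin k) : G.Adj (a i) c := (hca i).symm
  have hba (i j : Fin k) : G.Adj (b j) (a i) ↔ i = j := by rw [G.adj_comm, hab]
  have hbc (i : Fin k) : ¬ G.Adj (b i) c := fun h => hcb i h.symm
  have hca_ne (i : Fin k) : c ≠ a i := G.ne_of_adj (hca i)
  have hab_ne (i j : Fin k) : a i ≠ b j := fun h => hcb j (h ▸ hca i)
  have ha (i j : Fin k) : a i = a j ↔ i = j :=
    ⟨fun h => ((hab j i).1 (h ▸ (hab i i).2 rfl)).symm, congrArg a⟩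
  have hb (i j : Fin k) : b i = b j ↔ i = j :=
    ⟨fun h => (hab i j).1 (h ▸ (hab i i).2 rfl), congrArg b⟩
  have key (u v : Fin (2 * k + 1)) :
      (f u = f v → u = v) ∧ (G.Adj (f u) (f v) ↔ (simpleTree k).Adj u v) := by
    rcases eq_zero_or_mid_or_leaf u with rfl | ⟨i, rfl⟩ | ⟨i, rfl⟩ <;>
    rcases eq_zero_or_mid_or_leaf v with rfl | ⟨j, rfl⟩ | ⟨j, rfl⟩ <;>
    simp [f_zero, f_mid, f_leaf, hca, hac, hab, hba, hcb, hbc, haa, hbb, ha, hb, hca_ne, hab_ne,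
      hcb_ne, (hca_ne _).symm, (hab_ne _ _).symm, (hcb_ne _).symm]
  exact ⟨⟨⟨f, fun u v h => (key u v).1 h⟩, (key _ _).2⟩⟩

end simpleTree

def completeBipartiteGraph.castLE {m m' n n' : ℕ} (hm : m ≤ m') (hn : n ≤ n') :
    completeBipartiteGraph (Fin m) (Fin n) ↪g completeBipartiteGraph (Fin m') (Fin n') :=
  ⟨(Fin.castLEEmb hm).sumMap (Fin.castLEEmb hn), by rintro (i | i) (j | j) <;> simp⟩

section CompleteBipartite

variable {V : Type*} {G : SimpleGraph V}

lemma nonempty_completeBipartiteGraph_embedding_of {p q : ℕ} {X Y : Finset V}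
    (hX : p ≤ #X) (hY : q ≤ #Y) (hXi : G.IsIndepSet X) (hYi : G.IsIndepSet Y)
    (hXY : ∀ x ∈ X, ∀ y ∈ Y, G.Adj x y) :
    Nonempty (completeBipartiteGraph (Fin p) (Fin q) ↪g G) := by
  obtain ⟨eX⟩ := Function.Embedding.nonempty_of_card_le (α := Fin p) (β := X) (by simpa)
  obtain ⟨eY⟩ := Function.Embedding.nonempty_of_card_le (α := Fin q) (β := Y) (by simpa)
  have hadj (i : Fin p) (j : Fin q) : G.Adj (eX i) (eY j) := hXY _ (eX i).2 _ (eY j).2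
  refine ⟨⟨⟨Sum.elim (fun i => eX i) (fun j => eY j), ?_⟩, ?_⟩⟩
  · exact (Subtype.val_injective.comp eX.injective).sumElim
      (Subtype.val_injective.comp eY.injective) fun i j => G.ne_of_adj (hadj i j)
  · rintro (i | i) (j | j)
    · simpa using fun h => hXi (eX i).2 (eX j).2 (G.ne_of_adj h) h
    · simpa using hadj i j
    · simpa using (hadj j i).symm
    · simpa using fun h => hYi (eY i).2 (eY j).2 (G.ne_of_adj h) h

end CompleteBipartite

namespace IsBipartition

variable {V : Type*} {G : SimpleGraph V} {W B : Set V}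

lemma mem_right_iff (h : IsBipartition G W B) {v : V} : v ∈ B ↔ v ∉ W := by
  obtain ⟨hcover, hdisj, -, -⟩ := h
  have : v ∈ W ∪ B := hcover ▸ Set.mem_univ v
  exact ⟨fun hB hW => hdisj.notMem_of_mem_left hW hB, this.resolve_left⟩

lemma mem_iff_notMem_of_adj (h : IsBipartition G W B) {u v : V} (huv : G.Adj u v) :
    u ∈ W ↔ v ∉ W := by
  refine ⟨fun hu hv => h.2.2.1 hu hv (G.ne_of_adj huv) huv, fun hv => ?_⟩
  by_contra hu
  exact h.2.2.2 (h.mem_right_iff.2 hu) (h.mem_right_iff.2 hv) (G.ne_of_adj huv) huv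

lemma not_adj_of_mem_iff (h : IsBipartition G W B) {u v : V} (huv : u ∈ W ↔ v ∈ W) :
    ¬ G.Adj u v :=
  fun hadj => by have := h.mem_iff_notMem_of_adj hadj; tauto

lemma subset_or_subset_of_forall_adj (h : IsBipartition G W B) {x : V} {Y : Set V}
    (hY : ∀ y ∈ Y, G.Adj x y) : Y ⊆ W ∨ Y ⊆ B := by
  by_cases hx : x ∈ W
  · exact Or.inr fun y hy => h.mem_right_iff.2 ((h.mem_iff_notMem_of_adj (hY y hy)).1 hx)
  · exact Or.inl fun y hy => by have := h.mem_iff_notMem_of_adj (hY y hy); tauto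

lemma isIndepSet_of_forall_adj (h : IsBipartition G W B) {x : V} {Y : Set V}
    (hY : ∀ y ∈ Y, G.Adj x y) : G.IsIndepSet Y := fun y hy y' hy' _ => h.not_adj_of_mem_iff (by
  have := h.mem_iff_notMem_of_adj (hY y hy)
  have := h.mem_iff_notMem_of_adj (hY y' hy')
  tauto)

/-- The legs of the tree are the paths `x - y - c y` for `y` in an independent set of the
relation `c y ~ y'`. -/
lemma nonempty_simpleTree_embedding [DecidableEq V] [DecidableRel G.Adj]
    (h : IsBipartition G W B) {x : V} {Y : Finset V} {m k : ℕ} (hY : ∀ y ∈ Y, G.Adj x y)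
    (hc : ∀ y ∈ Y, ∃ c, G.Adj y c ∧ c ≠ x ∧ #{y' ∈ Y | G.Adj c y'} < m)
    (hcard : 2 * m * k < #Y) : Nonempty (simpleTree k ↪g G) := by
  choose! c hyc hcx hcm using hc
  obtain ⟨S, hSY, hS, hYS⟩ :=
    exists_pairwise_not_rel_card_le (fun y y' => G.Adj (c y) y') m Y hcm
  obtain ⟨e⟩ := Function.Embedding.nonempty_of_card_le (α := Fin k) (β := S)
    (by simp only [Fintype.card_fin, Fintype.card_coe]; nlinarith)
  have hmem (i : Fin k) : (e i : V) ∈ Y := hSY (e i).2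
  have hside (i : Fin k) : (x ∈ W ↔ (e i : V) ∉ W) ∧ (x ∈ W ↔ c (e i) ∈ W) := by
    have := h.mem_iff_notMem_of_adj (hY _ (hmem i))
    have := h.mem_iff_notMem_of_adj (hyc _ (hmem i))
    tauto
  refine simpleTree.nonempty_embedding_of x (fun i => e i) (fun i => c (e i))
    (fun i => hY _ (hmem i)) (fun i j => ⟨fun hij => ?_, ?_⟩)
    (fun i => h.not_adj_of_mem_iff (hside i).2)
    (fun i j => h.not_adj_of_mem_iff (by have := hside i; have := hside j; tauto))
    (fun i j => h.not_adj_of_mem_iff (by have := hside i; have := hside j; tauto))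
    (fun i => (hcx _ (hmem i)).symm)
  · by_contra hne
    exact hS (e j).2 (e i).2 (fun h => hne (e.injective (Subtype.ext h)).symm) hij.symm
  · rintro rfl
    exact hyc _ (hmem i)

end IsBipartition

/-- With `m` the previous value, `2 m k + b + 2` common neighbours leave more than `2 m k` after
discarding the at most `b + 1` whose neighbourhood lies in `X`. -/
def commonNeighborBound (b k : ℕ) : ℕ → ℕ
  | 0 => b
  | n + 1 => 2 * commonNeighborBound b k n * k + b + 2

namespace IrreducibleBip

variable {V : Type*} {G : SimpleGraph V} {W B : Set V} {b k : ℕ}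

lemma ncard_le_ncard_add_one_of_forall_adj_mem [Finite V] (h : IrreducibleBip G W B) {X Z : Set V}
    (hZ : Z ⊆ W ∨ Z ⊆ B) (hZX : ∀ z ∈ Z, ∀ x, G.Adj z x → x ∈ X) : Z.ncard ≤ X.ncard + 1 := by
  obtain ⟨-, hcard, hsurplus, -⟩ := h
  rcases hZ with hZW | hZB
  · obtain rfl | hne := Z.eq_empty_or_nonempty
    · simp
    have hN : NSet G Z ∩ B ⊆ X := fun x ⟨⟨z, hz, hzx⟩, _⟩ => hZX z hz x hzx
    have := hsurplus Z hZW hne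
    have := Set.ncard_le_ncard hN
    omega
  · obtain hWX | hne := (W \ X).eq_empty_or_nonempty
    · have := Set.ncard_le_ncard (Set.sdiff_eq_empty.1 hWX)
      have := Set.ncard_le_ncard hZB
      omega
    have hN : NSet G (W \ X) ∩ B ⊆ B \ Z :=
      fun z ⟨⟨u, hu, huz⟩, hzB⟩ => ⟨hzB, fun hz => hu.2 (hZX z hz u huz.symm)⟩
    have := hsurplus _ Set.sdiff_subset hne
    have := Set.ncard_le_ncard hN
    have := Set.le_ncard_sdiff X W
    have := Set.ncard_sdiff hZB
    have := Set.ncard_le_ncard hZB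
    omega

/-- Induction on the number `n` of vertices still missing from a `K_{b,b}`: either some vertex
outside `X` sees many of the common neighbours `Y` and joins `X`, or, after discarding the at most
`|X| + 1` vertices of `Y` with no neighbour outside `X`, the rest of `Y` carries a `T_k`. -/
theorem card_lt_commonNeighborBound [Fintype V] [DecidableEq V] [DecidableRel G.Adj]
    (h : IrreducibleBip G W B)
    (hK : IsEmpty (completeBipartiteGraph (Fin b) (Fin b) ↪g G))
    (hT : IsEmpty (simpleTree k ↪g G)) (n : ℕ) {X Y : Finset V} (hX : X.Nonempty)
    (hXn : #X + n = b) (hXY : ∀ x ∈ X, ∀ y ∈ Y, G.Adj x y) :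
    #Y < commonNeighborBound b k n := by
  induction n generalizing X Y with
  | zero =>
    by_contra! hY
    rw [commonNeighborBound] at hY
    obtain ⟨y, hy⟩ := card_pos.1 (show 0 < #Y by have := hX.card_pos; omega)
    obtain ⟨x, hx⟩ := hX
    exact hK.false (nonempty_completeBipartiteGraph_embedding_of (by omega) hY
      (h.1.isIndepSet_of_forall_adj fun x' hx' => (hXY x' hx' y hy).symm)
      (h.1.isIndepSet_of_forall_adj (hXY x hx)) hXY).some
  | succ n ih =>
    by_contra! hY
    rw [commonNeighborBound] at hY
    set m := commonNeighborBound b k n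
    by_cases hc : ∃ c ∉ X, m ≤ #{y ∈ Y | G.Adj c y}
    · obtain ⟨c, hcX, hcY⟩ := hc
      refine (ih (X := insert c X) (Y := {y ∈ Y | G.Adj c y}) (insert_nonempty c X)
        (by rw [card_insert_of_notMem hcX]; omega) ?_).not_ge hcY
      simp only [mem_insert, mem_filter]
      rintro x (rfl | hx) y ⟨hy, hxy⟩
      exacts [hxy, hXY x hx y hy]
    push Not at hc
    obtain ⟨x, hx⟩ := hX
    set Good := {y ∈ Y | ∃ c, G.Adj y c ∧ c ∉ X}
    have hBad : #(Y \ Good) ≤ #X + 1 := by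
      have hside := h.1.subset_or_subset_of_forall_adj (Y := ↑(Y \ Good))
        fun y hy => hXY x hx y (mem_sdiff.1 hy).1
      have := h.ncard_le_ncard_add_one_of_forall_adj_mem (X := ↑X) hside fun y hy c hyc =>
        not_not.1 fun hcX => (mem_sdiff.1 hy).2 (mem_filter.2 ⟨(mem_sdiff.1 hy).1, c, hyc, hcX⟩)
      rwa [Set.ncard_coe_finset, Set.ncard_coe_finset] at this
    refine hT.false (h.1.nonempty_simpleTree_embedding (x := x) (Y := Good) (m := m)
      (fun y hy => hXY x hx y (mem_filter.1 hy).1) (fun y hy => ?_) ?_).some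
    · obtain ⟨c, hyc, hcX⟩ := (mem_filter.1 hy).2
      exact ⟨c, hyc, fun hcx => hcX (hcx ▸ hx),
        (card_le_card (filter_subset_filter _ (filter_subset _ _))).trans_lt
          (hc c hcX)⟩
    · have := card_sdiff_add_card_eq_card (s := Good) (t := Y) (filter_subset _ _)
      omega

theorem degree_lt_commonNeighborBound [Fintype V] [DecidableEq V] [DecidableRel G.Adj]
    (h : IrreducibleBip G W B) (hb : 0 < b)
    (hK : IsEmpty (completeBipartiteGraph (Fin b) (Fin b) ↪g G))
    (hT : IsEmpty (simpleTree k ↪g G)) (v : V) : G.degree v < commonNeighborBound b k (b - 1) :=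
  h.card_lt_commonNeighborBound hK hT (b - 1) (singleton_nonempty v) (by simp; omega)
    (by simp)

theorem card_le_commonNeighborBound_pow [Fintype V] (h : IrreducibleBip G W B) (hb : 0 < b)
    {a : ℕ} (hP : IsEmpty (pathGraph a ↪g G))
    (hK : IsEmpty (completeBipartiteGraph (Fin b) (Fin b) ↪g G))
    (hT : IsEmpty (simpleTree k ↪g G)) :
    Fintype.card V ≤ commonNeighborBound b k (b - 1) ^ (a - 2) := by
  classical
  refine h.2.2.2.card_le_pow_of_degree_lt (h.degree_lt_commonNeighborBound hb hK hT) fun u v => ?_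
  by_contra! hlt
  exact hP.false ((h.2.2.2 u v).nonempty_pathGraph_embedding (by omega)).some

end IrreducibleBip

/-- For every `t ≥ 1` there is a bound `N(t)` such that every irreducible bipartite
graph with no induced `P_t`, no induced `K_{t-1,t}` and no induced `T_t` has at most
`N(t)` vertices. Equivalently, for all `i, j, k ≥ 1` there is a uniform bound on the
number of vertices of irreducible `(P_i, K_{j,j}, T_k)`-free graphs, so there are only
finitely many of them up to isomorphism. -/
theorem statement7 :
    (∀ t : ℕ, 1 ≤ t → ∃ N : ℕ,
      ∀ (V : Type) [Fintype V] (G : SimpleGraph V) (W B : Set V),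
        IrreducibleBip G W B →
        IsEmpty (pathGraph t ↪g G) →
        IsEmpty (completeBipartiteGraph (Fin (t - 1)) (Fin t) ↪g G) →
        IsEmpty (simpleTree t ↪g G) →
        Fintype.card V ≤ N) ∧
    (∀ i j k : ℕ, 1 ≤ i → 1 ≤ j → 1 ≤ k → ∃ N : ℕ,
      ∀ (V : Type) [Fintype V] (G : SimpleGraph V) (W B : Set V),
        IrreducibleBip G W B →
        IsEmpty (pathGraph i ↪g G) →
        IsEmpty (completeBipartiteGraph (Fin j) (Fin j) ↪g G) →
        IsEmpty (simpleTree k ↪g G) →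
        Fintype.card V ≤ N) := by
  refine ⟨fun t ht => ⟨commonNeighborBound t t (t - 1) ^ (t - 2),
    fun V _ G W B h hP hK hT => h.card_le_commonNeighborBound_pow ht hP ?_ hT⟩,
    fun i j k _ hj _ => ⟨commonNeighborBound j k (j - 1) ^ (i - 2),
    fun V _ G W B h hP hK hT => h.card_le_commonNeighborBound_pow hj hP hK hT⟩⟩
  exact ⟨fun e => hK.false (e.comp (completeBipartiteGraph.castLE (Nat.sub_le t 1) le_rfl))⟩
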